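/- After steps 1–3 of the connection procedure (before step 4), every component formed by chosen edges has depth at most 2: no vertex can have a grandparent via two chosen edges both selected in steps 1–3. -/

import Mathlib

section
variable {V : Type*} (par : V → Option V) (col : V → Fin 3)

/-- Step 1: every vertex of color 1 (here color `0`) that has a parent chooses
its parent. -/
def S1 : Set V := {v | col v = 0 ∧ ∃ u, par v = some u}

/-- Vertices marked "connected" after step 1: the choosers and the chosen
parents. -/
def C1 : Set V := S1 par col ∪ {u | ∃ v ∈ S1 par col, par v = some u}

/-- Step 2: every vertex of color 2 (here color `1`) that is not yet connected
and whose parent is not yet connected chooses its parent. -/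
def S2 : Set V := {v | col v = 1 ∧ v ∉ C1 par col ∧ ∃ u, par v = some u ∧ u ∉ C1 par col}

/-- Vertices marked "connected" after step 2. -/
def C2 : Set V := C1 par col ∪ S2 par col ∪ {u | ∃ v ∈ S2 par col, par v = some u}

/-- Step 3: likewise for color 3 (here color `2`). -/
def S3 : Set V := {v | col v = 2 ∧ v ∉ C2 par col ∧ ∃ u, par v = some u ∧ u ∉ C2 par col}

/-- Vertices marked "connected" after step 3. -/
def C3 : Set V := C2 par col ∪ S3 par col ∪ {u | ∃ v ∈ S3 par col, par v = some u}

/-- Step 4: every vertex still unconnected after steps 1–3 that has a parent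
chooses its parent. -/
def S4 : Set V := {v | v ∉ C3 par col ∧ ∃ u, par v = some u}

/-- The edge from `v` to its parent `u` is chosen during steps 1–3. -/
def chosen13 (v u : V) : Prop :=
  par v = some u ∧ v ∈ S1 par col ∪ S2 par col ∪ S3 par col

/-- The edge from `v` to its parent `u` is chosen during the whole procedure
(steps 1–4). -/
def chosen (v u : V) : Prop :=
  par v = some u ∧ v ∈ S1 par col ∪ S2 par col ∪ S3 par col ∪ S4 par col

end

/-!
If `v` chooses its parent `u` at step `i` and `u` chooses its own parent at step `j`, then
`i ≠ j` because the step is the color and the coloring is proper. If `i < j`, then `u` was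
connected by `v` at step `i`, so it could not choose at step `j`; if `j < i`, then `u` was
already connected after step `j`, so `v` could not choose it at step `i`.
-/

section

variable {V : Type*} (par : V → Option V) (col : V → Fin 3)

def chooserAt : Fin 3 → Set V := ![S1 par col, S2 par col, S3 par col]

def connectedAfter : Fin 3 → Set V := ![C1 par col, C2 par col, C3 par col]

variable {par col}

theorem mem_S1_union_S2_union_S3 {v : V} :
    v ∈ S1 par col ∪ S2 par col ∪ S3 par col ↔ ∃ k, v ∈ chooserAt par col k := by
  simp [chooserAt, Fin.exists_fin_succ, or_assoc]

theorem col_eq_of_mem_chooserAt {v : V} {k : Fin 3} (hv : v ∈ chooserAt par col k) :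
    col v = k := by
  fin_cases k <;> exact hv.1

theorem mem_connectedAfter_of_mem_chooserAt {v : V} {k : Fin 3}
    (hv : v ∈ chooserAt par col k) : v ∈ connectedAfter par col k := by
  fin_cases k
  · exact Or.inl hv
  · exact Or.inl (Or.inr hv)
  · exact Or.inl (Or.inr hv)

theorem parent_mem_connectedAfter {v u : V} {k : Fin 3} (hv : v ∈ chooserAt par col k)
    (hvu : par v = some u) : u ∈ connectedAfter par col k := by
  fin_cases k
  · exact Or.inr ⟨v, hv, hvu⟩
  · exact Or.inr ⟨v, hv, hvu⟩
  · exact Or.inr ⟨v, hv, hvu⟩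

theorem C1_subset_C2 : C1 par col ⊆ C2 par col := fun _ h => Or.inl (Or.inl h)

theorem not_mem_connectedAfter_of_lt {v : V} {i k : Fin 3} (hv : v ∈ chooserAt par col k)
    (hik : i < k) : v ∉ connectedAfter par col i := by
  fin_cases k <;> fin_cases i <;> try exact absurd hik (by decide)
  · exact hv.2.1
  · exact fun h => hv.2.1 (C1_subset_C2 h)
  · exact hv.2.1

theorem parent_not_mem_connectedAfter_of_lt {v u : V} {i k : Fin 3}
    (hv : v ∈ chooserAt par col k) (hvu : par v = some u) (hik : i < k) :
    u ∉ connectedAfter par col i := by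
  fin_cases k <;> fin_cases i <;> try exact absurd hik (by decide)
  all_goals
    obtain ⟨u', hu', hu'C⟩ := hv.2.2
    obtain rfl : u' = u := Option.some_injective _ (hu'.symm.trans hvu)
  · exact hu'C
  · exact fun h => hu'C (C1_subset_C2 h)
  · exact hu'C

end

/-- After steps 1–3 of the connection procedure on a properly 3-colored rooted
forest (before step 4), every component formed by chosen edges has depth at
most 2: no vertex has a grandparent via two chosen edges both selected in
steps 1–3. -/
theorem stmt_12 {V : Type*} (par : V → Option V) (col : V → Fin 3)
    (hproper : ∀ v u, par v = some u → col v ≠ col u) :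
    ¬ ∃ v u w : V, chosen13 par col v u ∧ chosen13 par col u w := by
  rintro ⟨v, u, w, ⟨hvu, hv⟩, -, hu⟩
  obtain ⟨i, hv⟩ := mem_S1_union_S2_union_S3.mp hv
  obtain ⟨j, hu⟩ := mem_S1_union_S2_union_S3.mp hu
  have hij : i ≠ j := by
    rw [← col_eq_of_mem_chooserAt hv, ← col_eq_of_mem_chooserAt hu]
    exact hproper v u hvu
  rcases hij.lt_or_gt with hij | hji
  · exact not_mem_connectedAfter_of_lt hu hij (parent_mem_connectedAfter hv hvu)
  · exact parent_not_mem_connectedAfter_of_lt hv hvu hji (mem_connectedAfter_of_mem_chooserAt hu)
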